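/- Let G be an oriented loopless multigraph with oriented incidence matrix D ∈ ℝ^{V×E}. Then the image of the cut lattice under D equals the group of principal divisors: {Dx : x ∈ B_I} = {the Laplacian applied to f : f is a function V → ℤ}, as subsets of the integer-valued functions on V (viewed inside ℝ^V). -/

import Mathlib

open Matrix Finset

section MatrixSpaces

variable {ι κ : Type*} [Fintype ι] [Fintype κ]

/-- The cycle space `Z = ker D`. -/
def cycleSpace (D : Matrix ι κ ℝ) : Submodule ℝ (κ → ℝ) :=
  LinearMap.ker D.mulVecLin

/-- The cut space `B = Z^⊥`, the orthogonal complement of the cycle space with respect to the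
standard inner product. -/
def cutSpace (D : Matrix ι κ ℝ) : Submodule ℝ (κ → ℝ) where
  carrier := {x | ∀ z ∈ cycleSpace D, x ⬝ᵥ z = 0}
  add_mem' := by
    intro a b ha hb z hz
    simp [add_dotProduct, ha z hz, hb z hz]
  zero_mem' := by
    intro z hz
    simp
  smul_mem' := by
    intro c a ha z hz
    simp [smul_dotProduct, ha z hz]

/-- The cut lattice `B_I = B ∩ ℤ^E`. -/
def cutLattice (D : Matrix ι κ ℝ) : Set (κ → ℝ) :=
  {x | x ∈ cutSpace D ∧ ∀ e, ∃ k : ℤ, x e = (k : ℝ)}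

/-- The cut lattice `B_I`, as an additive subgroup. -/
def cutLatticeSub (D : Matrix ι κ ℝ) : AddSubgroup (κ → ℝ) where
  carrier := cutLattice D
  add_mem' := by
    rintro a b ⟨ha, ha'⟩ ⟨hb, hb'⟩
    refine ⟨Submodule.add_mem _ ha hb, fun e => ?_⟩
    obtain ⟨k, hk⟩ := ha' e
    obtain ⟨l, hl⟩ := hb' e
    exact ⟨k + l, by simp [hk, hl]⟩
  zero_mem' := ⟨Submodule.zero_mem _, fun e => ⟨0, by simp⟩⟩
  neg_mem' := by
    rintro a ⟨ha, ha'⟩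
    refine ⟨Submodule.neg_mem _ ha, fun e => ?_⟩
    obtain ⟨k, hk⟩ := ha' e
    exact ⟨-k, by simp [hk]⟩

/-- The dual lattice `B_I^# = {x ∈ B : ⟨x,b⟩ ∈ ℤ for all b ∈ B_I}`, as an additive subgroup. -/
def dualLatticeSub (D : Matrix ι κ ℝ) : AddSubgroup (κ → ℝ) where
  carrier := {x | x ∈ cutSpace D ∧ ∀ b ∈ cutLattice D, ∃ k : ℤ, x ⬝ᵥ b = (k : ℝ)}
  add_mem' := by
    rintro a b ⟨ha, ha'⟩ ⟨hb, hb'⟩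
    refine ⟨Submodule.add_mem _ ha hb, fun c hc => ?_⟩
    obtain ⟨k, hk⟩ := ha' c hc
    obtain ⟨l, hl⟩ := hb' c hc
    exact ⟨k + l, by simp [add_dotProduct, hk, hl]⟩
  zero_mem' := ⟨Submodule.zero_mem _, fun c _ => ⟨0, by simp⟩⟩
  neg_mem' := by
    rintro a ⟨ha, ha'⟩
    refine ⟨Submodule.neg_mem _ ha, fun c hc => ?_⟩
    obtain ⟨k, hk⟩ := ha' c hc
    exact ⟨-k, by simp [neg_dotProduct, hk]⟩

end MatrixSpaces

section Incidence

variable {V E : Type*} [Fintype V] [Fintype E] [DecidableEq V]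

/-- The oriented incidence matrix of an oriented multigraph with head map `h` and
tail map `t`. -/
def incMatrix (h t : E → V) : Matrix V E ℝ :=
  fun v e => if v = h e then 1 else if v = t e then -1 else 0

/-- The edge-multiplicity function determined by the orientation maps `h` and `t`. -/
def wOf (h t : E → V) (u v : V) : ℕ :=
  (Finset.univ.filter fun e => (h e = u ∧ t e = v) ∨ (h e = v ∧ t e = u)).card

end Incidence

variable {V : Type*}

/-- Degree of a vertex in the loopless multigraph with edge-multiplicity function `w`. -/
def mgDeg [Fintype V] (w : V → V → ℕ) (v : V) : ℕ := ∑ u, w v u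

/-- The Laplacian of the multigraph, as an additive homomorphism on `V → ℤ`. -/
def mgLap [Fintype V] (w : V → V → ℕ) : (V → ℤ) →+ (V → ℤ) :=
  AddMonoidHom.mk' (fun f v => (mgDeg w v : ℤ) * f v - ∑ u, (w v u : ℤ) * f u)
    (by
      intro f g
      funext v
      simp [mul_add, Finset.sum_add_distrib]
      ring)

/-!
The cut space is the row space of `D`, so a cut is the coboundary `e ↦ g (h e) - g (t e)` of a
real potential `g`. If the cut is integral, the differences of `g` along edges are integers, hence
so are its differences within each connected component; subtracting from `g` its value at a
chosen vertex of each component gives an integer potential with the same coboundary. Finally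
`D Dᵀ` is the Laplacian, so `D` maps the coboundary of `f` to the Laplacian of `f`.
-/

theorem Matrix.exists_vecMul_eq_of_dotProduct_eq_zero {K m n : Type*} [Field K] [Fintype m]
    [Fintype n] (D : Matrix m n K) {x : n → K}
    (hx : ∀ z, D *ᵥ z = 0 → x ⬝ᵥ z = 0) : ∃ g, g ᵥ* D = x := by
  classical
  have hmem : dotProductEquiv K n x ∈ (LinearMap.ker D.mulVecLin).dualAnnihilator :=
    (Submodule.mem_dualAnnihilator _).2 fun z hz => hx z hz
  rw [← LinearMap.range_dualMap_eq_dualAnnihilator_ker] at hmem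
  obtain ⟨ψ, hψ⟩ := hmem
  refine ⟨(dotProductEquiv K m).symm ψ, sub_eq_zero.1 <| dotProduct_eq_zero _ fun z => ?_⟩
  rw [sub_dotProduct, ← dotProduct_mulVec, sub_eq_zero]
  calc (dotProductEquiv K m).symm ψ ⬝ᵥ D *ᵥ z = ψ (D *ᵥ z) :=
        LinearMap.congr_fun ((dotProductEquiv K m).apply_symm_apply ψ) _
    _ = x ⬝ᵥ z := LinearMap.congr_fun hψ z

theorem mem_cutSpace_iff {ι κ : Type*} [Fintype ι] [Fintype κ] {D : Matrix ι κ ℝ}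
    {x : κ → ℝ} : x ∈ cutSpace D ↔ ∃ g, g ᵥ* D = x := by
  constructor
  · exact fun hx => D.exists_vecMul_eq_of_dotProduct_eq_zero fun z hz => hx z hz
  · rintro ⟨g, rfl⟩ z hz
    rw [← dotProduct_mulVec, show D *ᵥ z = 0 from hz, dotProduct_zero]

namespace AddSubgroup

variable {α G : Type*} [AddGroup G] (S : AddSubgroup G) {r : α → α → Prop} {g : α → G}

theorem sub_mem_of_eqvGen (hr : ∀ u v, r u v → g u - g v ∈ S) {u v : α}
    (huv : Relation.EqvGen r u v) : g u - g v ∈ S := by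
  induction huv with
  | rel a b hab => exact hr a b hab
  | refl a => simp
  | symm a b _ ih => simpa using S.neg_mem ih
  | trans a b c _ _ ihab ihbc => simpa using S.add_mem ihab ihbc

theorem exists_mem_potential (hr : ∀ u v, r u v → g u - g v ∈ S) :
    ∃ f : α → G, (∀ a, f a ∈ S) ∧ ∀ u v, r u v → f u - f v = g u - g v := by
  refine ⟨fun a => g a - g (Quot.mk r a).out,
    fun a => S.sub_mem_of_eqvGen hr (Quot.eqvGen_exact (Quot.out_eq _).symm), fun u v huv => ?_⟩
  simp only [Quot.sound huv, sub_sub_sub_cancel_right]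

end AddSubgroup

theorem mgLap_apply {V : Type*} [Fintype V] (w : V → V → ℕ) (f : V → ℤ) (v : V) :
    mgLap w f v = ∑ u, (w v u : ℤ) * (f v - f u) := by
  simp [mgLap, mgDeg, mul_sub, Finset.sum_mul]

section Incidence

variable {V E : Type*} [Fintype V] [DecidableEq V] {h t : E → V}

theorem vecMul_incMatrix_apply {e : E} (hne : h e ≠ t e) (g : V → ℝ) :
    (g ᵥ* incMatrix h t) e = g (h e) - g (t e) := by
  have hcol : (fun v => incMatrix h t v e) = Pi.single (h e) 1 + Pi.single (t e) (-1) := by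
    funext v
    by_cases hv : v = h e
    · simp [incMatrix, hv, hne]
    · simp [incMatrix, Pi.single_apply, hv]
  simp [vecMul, hcol, sub_eq_add_neg]

variable [Fintype E]

theorem sum_wOf_mul (hne : ∀ e, h e ≠ t e) (v : V) (φ : V → ℝ) :
    ∑ u, (wOf h t v u : ℝ) * φ u =
      ∑ e, ((if h e = v then φ (t e) else 0) + if t e = v then φ (h e) else 0) := by
  have hw (u : V) : (wOf h t v u : ℝ) =
      ∑ e, ((if h e = v ∧ t e = u then 1 else 0) + if h e = u ∧ t e = v then 1 else 0) := by
    rw [wOf, card_filter, Nat.cast_sum]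
    refine sum_congr rfl fun e _ => ?_
    have hexcl : ¬((h e = v ∧ t e = u) ∧ (h e = u ∧ t e = v)) :=
      fun ⟨⟨hv, _⟩, ⟨_, hv'⟩⟩ => hne e (hv.trans hv'.symm)
    split_ifs <;> first | norm_num; done | tauto
  simp_rw [hw, sum_mul, add_mul, ite_mul, one_mul, zero_mul]
  rw [sum_comm]
  simp [sum_add_distrib, ite_and]

theorem incMatrix_mulVec_vecMul_apply (hne : ∀ e, h e ≠ t e) (f : V → ℝ) (v : V) :
    (incMatrix h t *ᵥ (f ᵥ* incMatrix h t)) v = ∑ u, (wOf h t v u : ℝ) * (f v - f u) := by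
  rw [sum_wOf_mul hne, mulVec, dotProduct]
  refine sum_congr rfl fun e _ => ?_
  rw [vecMul_incMatrix_apply (hne e), incMatrix]
  split_ifs <;> subst_vars <;> simp_all [eq_comm]

theorem mem_cutLattice_incMatrix_iff (hne : ∀ e, h e ≠ t e) {x : E → ℝ} :
    x ∈ cutLattice (incMatrix h t) ↔ ∃ f : V → ℤ, (fun v => (f v : ℝ)) ᵥ* incMatrix h t = x := by
  constructor
  · rintro ⟨hcut, hint⟩
    obtain ⟨g, rfl⟩ := mem_cutSpace_iff.1 hcut
    have hedge : ∀ u v, (∃ e, h e = u ∧ t e = v) → g u - g v ∈ (Int.castAddHom ℝ).range := by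
      rintro _ _ ⟨e, rfl, rfl⟩
      obtain ⟨k, hk⟩ := hint e
      exact ⟨k, by rw [Int.coe_castAddHom, ← vecMul_incMatrix_apply (hne e), hk]⟩
    obtain ⟨f', hf'int, hf'⟩ := AddSubgroup.exists_mem_potential _ hedge
    choose f hf using hf'int
    simp only [Int.coe_castAddHom] at hf
    refine ⟨f, funext fun e => ?_⟩
    rw [vecMul_incMatrix_apply (hne e), vecMul_incMatrix_apply (hne e)]
    simpa only [hf] using hf' _ _ ⟨e, rfl, rfl⟩
  · rintro ⟨f, rfl⟩
    refine ⟨mem_cutSpace_iff.2 ⟨_, rfl⟩, fun e => ⟨f (h e) - f (t e), ?_⟩⟩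
    rw [vecMul_incMatrix_apply (hne e), Int.cast_sub]

end Incidence

/-- for an oriented loopless multigraph, the image of the cut lattice under the
incidence matrix `D` equals the set of principal divisors (images of the Laplacian), inside
`ℝ^V`. -/
theorem stmt13 (V E : Type*) [Fintype V] [Fintype E] [DecidableEq V]
    (h t : E → V) (hne : ∀ e : E, h e ≠ t e) :
    {y : V → ℝ | ∃ x ∈ cutLattice (incMatrix h t), (incMatrix h t).mulVec x = y} =
      {y : V → ℝ | ∃ f : V → ℤ, y = fun v => ((mgLap (wOf h t) f v : ℤ) : ℝ)} := by
  have hLap (f : V → ℤ) : incMatrix h t *ᵥ ((fun v => (f v : ℝ)) ᵥ* incMatrix h t) =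
      fun v => ((mgLap (wOf h t) f v : ℤ) : ℝ) := by
    funext v
    rw [incMatrix_mulVec_vecMul_apply hne, mgLap_apply]
    push_cast
    rfl
  ext y
  simp only [Set.mem_ofPred_eq, mem_cutLattice_incMatrix_iff hne]
  constructor
  · rintro ⟨_, ⟨f, rfl⟩, rfl⟩
    exact ⟨f, hLap f⟩
  · rintro ⟨f, rfl⟩
    exact ⟨_, ⟨f, rfl⟩, hLap f⟩
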